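/- Let d ≥ 3 be an integer and γ ≥ 1 a real number. Assume that (i) for every integer m ≥ 1, p_2(m) ≤ exp(π·√(2m/3)), and (ii) for every integer k ≥ 1, p_{d−1}(k) ≤ γ^{k^{1−1/(d−1)}}. Then for every integer n ≥ 1, p_d(n) ≤ exp(π·√(2n/3)) · d^{d·n^{1/d}} · γ^{d^{1/(d−1)}·n^{1−1/d}}, where all powers are real powers. -/

import Mathlib

/-!
Put `B = ⌊n ^ (1 / d)⌋`. A lower set `Q ⊆ ℕ^d` with `n < (B + 1) ^ d` elements cannot
contain the box `[0, B]^d`, so every `x ∈ Q` has a least coordinate `c` with `x c < B`. For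
fixed `c` and `j = x c < B`, deleting coordinate `c` and lowering the coordinates before `c`
by `B` turns these points into a lower set of `ℕ^(d-1)`. These `d * B` slices determine `Q`;
their sizes `k c j` are nonincreasing in `j` and add up to `n`. Sorting all the sizes gives a
partition of `n`, and recording the row `c` of each part recovers the size profile, so there
are at most `p_2(n) * d ^ (d * B)` profiles. For a fixed profile the slices can be chosen in
`∏ p_(d-1)(k c j) ≤ γ ^ (∑ k c j ^ (1 - 1/(d-1)))` ways, and concavity of
`t ↦ t ^ (1 - 1/(d-1))` bounds the exponent by
`(d * B) ^ (1/(d-1)) * n ^ (1 - 1/(d-1)) ≤ d ^ (1/(d-1)) * n ^ (1 - 1/d)`.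
-/

/-- `lowerCount d n` is the number of lower sets `Q ⊆ ℕ^d` with exactly `n` elements. -/
noncomputable def lowerCount (d n : ℕ) : ℕ :=
  Nat.card {Q : Finset (Fin d → ℕ) // IsLowerSet (↑Q : Set (Fin d → ℕ)) ∧ Q.card = n}

open Finset
open scoped Classical

section LowerSets

variable {d n : ℕ}

theorem IsLowerSet.prod_succ_le_card {Q : Finset (Fin d → ℕ)}
    (hQ : IsLowerSet (Q : Set (Fin d → ℕ))) {x : Fin d → ℕ} (hx : x ∈ Q) :
    ∏ i, (x i + 1) ≤ #Q := by
  have hsub : Iic x ⊆ Q := fun y hy => hQ (mem_Iic.mp hy) hx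
  simpa [Pi.card_Iic] using card_le_card hsub

noncomputable def lowerSets (d n : ℕ) : Finset (Finset (Fin d → ℕ)) :=
  (Fintype.piFinset fun _ => range n).powerset.filter
    fun Q => IsLowerSet (Q : Set (Fin d → ℕ)) ∧ #Q = n

theorem mem_lowerSets {Q : Finset (Fin d → ℕ)} :
    Q ∈ lowerSets d n ↔ IsLowerSet (Q : Set (Fin d → ℕ)) ∧ #Q = n := by
  refine ⟨fun h => (mem_filter.mp h).2, fun h => mem_filter.mpr ⟨?_, h⟩⟩
  refine mem_powerset.mpr fun x hx => Fintype.mem_piFinset.mpr fun i => mem_range.mpr ?_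
  have := (single_le_prod' (fun j _ => Nat.le_add_left 1 (x j)) (mem_univ i)).trans
    (h.1.prod_succ_le_card hx)
  omega

theorem card_lowerSets (d n : ℕ) : #(lowerSets d n) = lowerCount d n := by
  rw [lowerCount, ← Nat.card_eq_finsetCard]
  exact Nat.card_congr (Equiv.subtypeEquivRight fun _ => mem_lowerSets)

theorem lowerCount_zero (d : ℕ) : lowerCount d 0 = 1 := by
  rw [← card_lowerSets, card_eq_one]
  refine ⟨∅, eq_singleton_iff_unique_mem.mpr ⟨mem_lowerSets.mpr ⟨?_, rfl⟩,
    fun Q hQ => card_eq_zero.mp (mem_lowerSets.mp hQ).2⟩⟩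
  rw [coe_empty]
  exact isLowerSet_empty

theorem IsLowerSet.exists_lt_of_card_lt_pow {B : ℕ} {Q : Finset (Fin d → ℕ)}
    (hQ : IsLowerSet (Q : Set (Fin d → ℕ))) (hcard : #Q < (B + 1) ^ d) {x : Fin d → ℕ}
    (hx : x ∈ Q) : ∃ i, x i < B := by
  by_contra! h
  have : (B + 1) ^ d ≤ ∏ i, (x i + 1) := by
    simpa using prod_le_prod' (s := univ) fun i _ => Nat.succ_le_succ (h i)
  exact absurd (this.trans (hQ.prod_succ_le_card hx)) (not_le.mpr hcard)

end LowerSets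

noncomputable def profiles (m B n : ℕ) : Finset (Fin m × Fin B → ℕ) :=
  (Fintype.piFinset fun _ => range (n + 1)).filter
    fun f => (∀ c, Antitone fun j => f (c, j)) ∧ ∑ p, f p = n

theorem mem_profiles {m B n : ℕ} {f : Fin m × Fin B → ℕ} :
    f ∈ profiles m B n ↔ (∀ c, Antitone fun j => f (c, j)) ∧ ∑ p, f p = n := by
  refine ⟨fun h => (mem_filter.mp h).2, fun h => mem_filter.mpr ⟨?_, h⟩⟩
  exact Fintype.mem_piFinset.mpr fun p => mem_range.mpr <| Nat.lt_succ_of_le <|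
    h.2 ▸ single_le_sum (fun _ _ => Nat.zero_le _) (mem_univ p)

section Slices

variable {e : ℕ} (B : ℕ)

-- The points whose first coordinate below `B` is `c` are the `liftSlice B c j z` with `j < B`;
-- shifting by `B`, rather than requiring `z i ≥ B`, is what makes the slices lower sets.
def liftSlice (c : Fin (e + 1)) (j : ℕ) (z : Fin e → ℕ) : Fin (e + 1) → ℕ :=
  c.insertNth j fun i => if i.castSucc < c then z i + B else z i

variable {B}

theorem liftSlice_apply_self (c : Fin (e + 1)) (j : ℕ) (z : Fin e → ℕ) :
    liftSlice B c j z c = j :=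
  Fin.insertNth_apply_same _ _ _

theorem le_liftSlice_of_lt {c i : Fin (e + 1)} (hi : i < c) (j : ℕ) (z : Fin e → ℕ) :
    B ≤ liftSlice B c j z i := by
  simp [liftSlice, Fin.insertNth_apply_below hi, hi]

theorem liftSlice_mono {c : Fin (e + 1)} {j j' : ℕ} {z z' : Fin e → ℕ} (hj : j ≤ j')
    (hz : z ≤ z') : liftSlice B c j z ≤ liftSlice B c j' z' := by
  refine Fin.insertNth_le_iff.mpr ⟨by simpa [liftSlice] using hj, fun i => ?_⟩
  simp only [liftSlice, Fin.insertNth_apply_succAbove]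
  split_ifs <;> simp [hz i]

theorem liftSlice_injective (c : Fin (e + 1)) (j : ℕ) : Function.Injective (liftSlice B c j) := by
  intro z z' h
  funext i
  have := congrFun (Fin.insertNth_injective2 h).2 i
  split_ifs at this <;> omega

theorem liftSlice_inj {c c' : Fin (e + 1)} {j j' : ℕ} {z z' : Fin e → ℕ} (hj : j < B)
    (hj' : j' < B) (h : liftSlice B c j z = liftSlice B c' j' z') :
    c = c' ∧ j = j' ∧ z = z' := by
  have hc : c = c' := by
    by_contra hne
    rcases lt_or_gt_of_ne hne with hlt | hlt
    · have := le_liftSlice_of_lt (B := B) hlt j' z'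
      rw [← h, liftSlice_apply_self] at this
      omega
    · have := le_liftSlice_of_lt (B := B) hlt j z
      rw [h, liftSlice_apply_self] at this
      omega
  subst hc
  have hjj : j = j' := by simpa [liftSlice_apply_self] using congrFun h c
  subst hjj
  exact ⟨rfl, rfl, liftSlice_injective c j h⟩

theorem exists_liftSlice {x : Fin (e + 1) → ℕ} (hx : ∃ i, x i < B) :
    ∃ c, x c < B ∧ ∃ z, liftSlice B c (x c) z = x := by
  obtain ⟨c, hc, hmin⟩ := WellFounded.has_min wellFounded_lt {i | x i < B} hx
  refine ⟨c, hc, fun i => if i.castSucc < c then x (c.succAbove i) - B else x (c.succAbove i),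
    Fin.insertNth_eq_iff.mpr ⟨rfl, funext fun i => ?_⟩⟩
  simp only [Fin.removeNth]
  split_ifs with hi
  · have hlt : c.succAbove i < c := by rwa [Fin.succAbove_of_castSucc_lt c i hi]
    have : ¬ x (c.succAbove i) < B := fun h => hmin _ h hlt
    omega
  · rfl

noncomputable def shiftedSlice (B : ℕ) (Q : Finset (Fin (e + 1) → ℕ)) (c : Fin (e + 1))
    (j : ℕ) : Finset (Fin e → ℕ) :=
  Q.preimage (liftSlice B c j) (liftSlice_injective c j).injOn

theorem mem_shiftedSlice {Q : Finset (Fin (e + 1) → ℕ)} {c : Fin (e + 1)} {j : ℕ}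
    {z : Fin e → ℕ} : z ∈ shiftedSlice B Q c j ↔ liftSlice B c j z ∈ Q :=
  mem_preimage

variable {Q Q' : Finset (Fin (e + 1) → ℕ)}

theorem isLowerSet_shiftedSlice (hQ : IsLowerSet (Q : Set (Fin (e + 1) → ℕ))) (c : Fin (e + 1))
    (j : ℕ) : IsLowerSet (shiftedSlice B Q c j : Set (Fin e → ℕ)) :=
  fun _ _ hz hz' =>
    mem_shiftedSlice.mpr <| hQ (liftSlice_mono le_rfl hz) (mem_shiftedSlice.mp hz')

theorem shiftedSlice_anti (hQ : IsLowerSet (Q : Set (Fin (e + 1) → ℕ))) (c : Fin (e + 1))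
    {j j' : ℕ} (hj : j ≤ j') : shiftedSlice B Q c j' ⊆ shiftedSlice B Q c j :=
  fun _ hz => mem_shiftedSlice.mpr <| hQ (liftSlice_mono hj le_rfl) (mem_shiftedSlice.mp hz)

theorem sum_card_shiftedSlice (hQB : ∀ x ∈ Q, ∃ i, x i < B) :
    ∑ p : Fin (e + 1) × Fin B, #(shiftedSlice B Q p.1 p.2) = #Q := by
  rw [← card_sigma]
  refine card_bij (fun q _ => liftSlice B q.1.1 q.1.2 q.2) (fun q hq => ?_) ?_ ?_
  · exact mem_shiftedSlice.mp (mem_sigma.mp hq).2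
  · rintro ⟨⟨c, j⟩, z⟩ - ⟨⟨c', j'⟩, z'⟩ - h
    obtain ⟨rfl, hj, rfl⟩ := liftSlice_inj j.isLt j'.isLt h
    obtain rfl := Fin.ext hj
    rfl
  · intro x hx
    obtain ⟨c, hc, z, hz⟩ := exists_liftSlice (hQB x hx)
    refine ⟨⟨(c, ⟨x c, hc⟩), z⟩, mem_sigma.mpr ⟨mem_univ _, ?_⟩, hz⟩
    exact mem_shiftedSlice.mpr (by rwa [hz])

theorem subset_of_shiftedSlice_subset (hQB : ∀ x ∈ Q, ∃ i, x i < B)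
    (h : ∀ p : Fin (e + 1) × Fin B, shiftedSlice B Q p.1 p.2 ⊆ shiftedSlice B Q' p.1 p.2) :
    Q ⊆ Q' := by
  intro x hx
  obtain ⟨c, hc, z, hz⟩ := exists_liftSlice (hQB x hx)
  exact hz ▸ mem_shiftedSlice.mp (h (c, ⟨x c, hc⟩) (mem_shiftedSlice.mpr (by rwa [hz])))

end Slices

theorem card_lowerSets_succ_le {e B n : ℕ} (hn : n < (B + 1) ^ (e + 1)) :
    #(lowerSets (e + 1) n) ≤ ∑ f ∈ profiles (e + 1) B n, ∏ p, #(lowerSets e (f p)) := by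
  have hcover : ∀ Q ∈ lowerSets (e + 1) n, ∀ x ∈ Q, ∃ i, x i < B := fun Q hQ _ =>
    (mem_lowerSets.mp hQ).1.exists_lt_of_card_lt_pow ((mem_lowerSets.mp hQ).2 ▸ hn)
  calc #(lowerSets (e + 1) n)
      ≤ #((profiles (e + 1) B n).biUnion
          fun f => Fintype.piFinset fun p => lowerSets e (f p)) := by
        refine card_le_card_of_injOn (fun Q p => shiftedSlice B Q p.1 p.2) (fun Q hQ => ?_)
          fun Q hQ Q' hQ' h => ?_
        · obtain ⟨hlow, hcard⟩ := mem_lowerSets.mp hQ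
          refine mem_biUnion.mpr ⟨fun p => #(shiftedSlice B Q p.1 p.2),
            mem_profiles.mpr ⟨?_, ?_⟩, Fintype.mem_piFinset.mpr fun p => ?_⟩
          · exact fun c j j' hj => card_le_card (shiftedSlice_anti hlow c (Fin.le_def.mp hj))
          · exact (sum_card_shiftedSlice (hcover Q hQ)).trans hcard
          · exact mem_lowerSets.mpr ⟨isLowerSet_shiftedSlice hlow _ _, rfl⟩
        · exact (subset_of_shiftedSlice_subset (hcover Q hQ) fun p => (congrFun h p).le).antisymm
            (subset_of_shiftedSlice_subset (hcover Q' hQ') fun p => (congrFun h p).ge)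
    _ ≤ ∑ f ∈ profiles (e + 1) B n, #(Fintype.piFinset fun p => lowerSets e (f p)) :=
        card_biUnion_le
    _ = ∑ f ∈ profiles (e + 1) B n, ∏ p, #(lowerSets e (f p)) := by
        simp only [Fintype.card_piFinset]

theorem exists_equiv_antitone_comp {ι α : Type*} [LinearOrder α] {N : ℕ} (σ₀ : Fin N ≃ ι)
    (f : ι → α) : ∃ σ : Fin N ≃ ι, Antitone (f ∘ σ) :=
  ⟨(Tuple.sort (OrderDual.toDual ∘ f ∘ σ₀)).trans σ₀,
    Tuple.monotone_sort (OrderDual.toDual ∘ f ∘ σ₀)⟩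

theorem Antitone.le_iff_lt_card_filter {B : ℕ} {g : Fin B → ℕ} (hg : Antitone g) (v : ℕ)
    (j : Fin B) : v ≤ g j ↔ (j : ℕ) < #{j' | v ≤ g j'} := by
  constructor
  · intro h
    have := card_le_card fun j' (hj' : j' ∈ Iic j) =>
      mem_filter.mpr ⟨mem_univ j', h.trans (hg (mem_Iic.mp hj'))⟩
    rw [Fin.card_Iic] at this
    omega
  · intro h
    by_contra! hlt
    have := card_le_card fun j' (hj' : j' ∈ ({j' | v ≤ g j'} : Finset (Fin B))) =>
      mem_Iio.mpr <| lt_of_not_ge fun hjj => ((mem_filter.mp hj').2.trans (hg hjj)).not_gt hlt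
    rw [Fin.card_Iio] at this
    omega

section Diagram

variable {N : ℕ}

noncomputable def diagram (l : Fin N → ℕ) : Finset (Fin 2 → ℕ) :=
  ((univ : Finset (Fin N)).sigma fun y => range (l y)).image fun q => ![q.2, q.1]

theorem mem_diagram {l : Fin N → ℕ} {x : Fin 2 → ℕ} :
    x ∈ diagram l ↔ ∃ y : Fin N, (y : ℕ) = x 1 ∧ x 0 < l y := by
  simp only [diagram, mem_image, mem_sigma, mem_univ, mem_range, true_and]
  constructor
  · rintro ⟨⟨y, u⟩, hu, rfl⟩
    exact ⟨y, rfl, hu⟩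
  · rintro ⟨y, hy, hx⟩
    exact ⟨⟨y, x 0⟩, hx, by ext i; fin_cases i <;> simp [hy]⟩

theorem vecCons_mem_diagram {l : Fin N → ℕ} (u : ℕ) (y : Fin N) :
    ![u, (y : ℕ)] ∈ diagram l ↔ u < l y := by
  simp [mem_diagram, Fin.val_inj]

theorem isLowerSet_diagram {l : Fin N → ℕ} (hl : Antitone l) :
    IsLowerSet (diagram l : Set (Fin 2 → ℕ)) := by
  intro x x' hle hx
  obtain ⟨y, hy, hx0⟩ := mem_diagram.mp hx
  have hy' : x' 1 < N := (hle 1).trans_lt (hy ▸ y.isLt)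
  exact mem_diagram.mpr ⟨⟨x' 1, hy'⟩, rfl,
    (hle 0).trans_lt (hx0.trans_le (hl (Fin.le_def.mpr (hy ▸ hle 1))))⟩

theorem card_diagram (l : Fin N → ℕ) : #(diagram l) = ∑ y, l y := by
  rw [diagram, card_image_of_injective, card_sigma]
  · simp
  · rintro ⟨y, u⟩ ⟨y', u'⟩ h
    have h0 := congrFun h 0
    have h1 := congrFun h 1
    simp only [Matrix.cons_val_zero, Matrix.cons_val_one] at h0 h1
    obtain rfl := Fin.ext h1
    rw [h0]

theorem diagram_injective : Function.Injective (diagram (N := N)) := fun l l' h =>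
  funext fun y => eq_of_forall_lt_iff fun u => by
    rw [← vecCons_mem_diagram, ← vecCons_mem_diagram, h]

end Diagram

section Profiles

variable {m B N : ℕ}

theorem card_filter_row_eq_card_filter_equiv (σ : Fin N ≃ Fin m × Fin B)
    (f : Fin m × Fin B → ℕ) (c : Fin m) (v : ℕ) :
    #{j | v ≤ f (c, j)} = #{y | (σ y).1 = c ∧ v ≤ f (σ y)} := by
  refine card_nbij' (fun j => σ.symm (c, j)) (fun y => (σ y).2) ?_ ?_ ?_ ?_
  · intro j hj
    simpa using hj
  · intro y hy
    obtain ⟨-, hc, hv⟩ := mem_filter.mp hy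
    simpa [← hc] using hv
  · intro j _
    simp
  · intro y hy
    obtain ⟨-, hc, -⟩ := mem_filter.mp hy
    simp [← hc]

theorem eq_of_comp_equiv_eq {f f' : Fin m × Fin B → ℕ} (hf : ∀ c, Antitone fun j => f (c, j))
    (hf' : ∀ c, Antitone fun j => f' (c, j)) {σ σ' : Fin N ≃ Fin m × Fin B}
    (hval : f ∘ σ = f' ∘ σ') (hcol : Prod.fst ∘ σ = Prod.fst ∘ σ') : f = f' := by
  have key : ∀ c j v, v ≤ f (c, j) ↔ v ≤ f' (c, j) := by
    intro c j v
    have h1 : ∀ y, (σ y).1 = (σ' y).1 := congrFun hcol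
    have h2 : ∀ y, f (σ y) = f' (σ' y) := congrFun hval
    rw [(hf c).le_iff_lt_card_filter, (hf' c).le_iff_lt_card_filter,
      card_filter_row_eq_card_filter_equiv σ, card_filter_row_eq_card_filter_equiv σ']
    simp only [h1, h2]
  funext ⟨c, j⟩
  exact le_antisymm ((key c j _).mp le_rfl) ((key c j _).mpr le_rfl)

-- Sorting all values of `f` gives a partition of `n`; adding the row of each part makes
-- the code injective.
theorem card_profiles_le (m B n : ℕ) : #(profiles m B n) ≤ #(lowerSets 2 n) * m ^ (m * B) := by
  choose σ hσ using fun f : Fin m × Fin B → ℕ =>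
    exists_equiv_antitone_comp finProdFinEquiv.symm f
  calc #(profiles m B n) ≤ #(lowerSets 2 n ×ˢ (univ : Finset (Fin (m * B) → Fin m))) := by
        refine card_le_card_of_injOn (fun f => (diagram (f ∘ σ f), Prod.fst ∘ σ f))
          (fun f hf => ?_) fun f hf f' hf' h => ?_
        · refine mem_product.mpr
            ⟨mem_lowerSets.mpr ⟨isLowerSet_diagram (hσ f), ?_⟩, mem_univ _⟩
          rw [card_diagram]
          exact (Equiv.sum_comp (σ f) f).trans (mem_profiles.mp hf).2
        · obtain ⟨hdiag, hcol⟩ := Prod.mk.inj h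
          exact eq_of_comp_equiv_eq (mem_profiles.mp hf).1 (mem_profiles.mp hf').1
            (diagram_injective hdiag) hcol
    _ = #(lowerSets 2 n) * m ^ (m * B) := by simp [card_product]

end Profiles

theorem Real.sum_rpow_le_card_rpow_mul_rpow_sum {ι : Type*} (s : Finset ι) {x : ι → ℝ}
    (hx : ∀ i ∈ s, 0 ≤ x i) {p : ℝ} (hp₀ : 0 ≤ p) (hp₁ : p ≤ 1) :
    ∑ i ∈ s, x i ^ p ≤ (#s : ℝ) ^ (1 - p) * (∑ i ∈ s, x i) ^ p := by
  rcases s.eq_empty_or_nonempty with rfl | hs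
  · simp only [sum_empty]
    positivity
  have hN : (0 : ℝ) < #s := by exact_mod_cast hs.card_pos
  have jensen := (Real.concaveOn_rpow hp₀ hp₁).le_map_sum (t := s)
    (w := fun _ => (#s : ℝ)⁻¹) (fun _ _ => by positivity) (by simp [hN.ne'])
    fun i hi => Set.mem_Ici.mpr (hx i hi)
  simp only [smul_eq_mul, ← mul_sum] at jensen
  rw [Real.mul_rpow (by positivity) (sum_nonneg hx), Real.inv_rpow hN.le] at jensen
  calc ∑ i ∈ s, x i ^ p = (#s : ℝ) * ((#s : ℝ)⁻¹ * ∑ i ∈ s, x i ^ p) := by field_simp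
    _ ≤ (#s : ℝ) * (((#s : ℝ) ^ p)⁻¹ * (∑ i ∈ s, x i) ^ p) :=
        mul_le_mul_of_nonneg_left jensen hN.le
    _ = (#s : ℝ) ^ (1 - p) * (∑ i ∈ s, x i) ^ p := by
        rw [Real.rpow_sub hN, Real.rpow_one]
        ring

theorem lowerCount_succ_le {e B n : ℕ} {γ α : ℝ} (hγ : 1 ≤ γ) (hα₀ : 0 ≤ α)
    (hα₁ : α ≤ 1)
    (hprev : ∀ k, 1 ≤ k → (lowerCount e k : ℝ) ≤ γ ^ ((k : ℝ) ^ α))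
    (hn : n < (B + 1) ^ (e + 1)) :
    (lowerCount (e + 1) n : ℝ) ≤ lowerCount 2 n * ((e + 1 : ℕ) : ℝ) ^ ((e + 1) * B) *
      γ ^ ((((e + 1) * B : ℕ) : ℝ) ^ (1 - α) * (n : ℝ) ^ α) := by
  have hcount : ∀ k, (lowerCount e k : ℝ) ≤ γ ^ ((k : ℝ) ^ α) := by
    intro k
    rcases Nat.eq_zero_or_pos k with rfl | hk
    · rw [lowerCount_zero, Nat.cast_one]
      exact Real.one_le_rpow hγ (by positivity)
    · exact hprev k hk
  have hprofile : ∀ f ∈ profiles (e + 1) B n, ∏ p, (#(lowerSets e (f p)) : ℝ) ≤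
      γ ^ ((((e + 1) * B : ℕ) : ℝ) ^ (1 - α) * (n : ℝ) ^ α) := by
    intro f hf
    have hsum : ∑ p, (f p : ℝ) = n := by exact_mod_cast (mem_profiles.mp hf).2
    calc ∏ p, (#(lowerSets e (f p)) : ℝ) ≤ ∏ p, γ ^ ((f p : ℝ) ^ α) :=
          prod_le_prod (fun _ _ => by positivity) fun p _ => card_lowerSets e (f p) ▸ hcount _
      _ = γ ^ (∑ p, (f p : ℝ) ^ α) := (Real.rpow_sum_of_pos (by linarith) _ _).symm
      _ ≤ γ ^ ((((e + 1) * B : ℕ) : ℝ) ^ (1 - α) * (n : ℝ) ^ α) := by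
          refine Real.rpow_le_rpow_of_exponent_le hγ ?_
          simpa [hsum] using Real.sum_rpow_le_card_rpow_mul_rpow_sum univ
            (fun p _ => Nat.cast_nonneg (f p)) hα₀ hα₁
  calc (lowerCount (e + 1) n : ℝ) = #(lowerSets (e + 1) n) := by rw [card_lowerSets]
    _ ≤ ∑ f ∈ profiles (e + 1) B n, ∏ p, (#(lowerSets e (f p)) : ℝ) := by
        exact_mod_cast card_lowerSets_succ_le hn
    _ ≤ #(profiles (e + 1) B n) *
          γ ^ ((((e + 1) * B : ℕ) : ℝ) ^ (1 - α) * (n : ℝ) ^ α) := by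
        simpa using sum_le_sum hprofile
    _ ≤ lowerCount 2 n * ((e + 1 : ℕ) : ℝ) ^ ((e + 1) * B) *
          γ ^ ((((e + 1) * B : ℕ) : ℝ) ^ (1 - α) * (n : ℝ) ^ α) := by
        gcongr
        rw [← card_lowerSets]
        exact_mod_cast card_profiles_le (e + 1) B n

theorem lt_floor_rpow_one_div_add_one_pow {x : ℝ} (hx : 0 ≤ x) {d : ℕ} (hd : d ≠ 0) :
    x < ((⌊x ^ ((1 : ℝ) / d)⌋₊ : ℝ) + 1) ^ d :=
  calc x = (x ^ ((1 : ℝ) / d)) ^ d := by rw [one_div, Real.rpow_inv_natCast_pow hx hd]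
    _ < _ := pow_lt_pow_left₀ (Nat.lt_floor_add_one _) (by positivity) hd

theorem mul_rpow_mul_rpow_le_of_le_rpow {d b x : ℝ} (hd : 1 < d) (hb : 0 ≤ b) (hx : 0 < x)
    (hbx : b ≤ x ^ (1 / d)) :
    (d * b) ^ (1 / (d - 1)) * x ^ (1 - 1 / (d - 1)) ≤ d ^ (1 / (d - 1)) * x ^ (1 - 1 / d) := by
  have hd₁ : 0 < d - 1 := by linarith
  calc (d * b) ^ (1 / (d - 1)) * x ^ (1 - 1 / (d - 1))
      = d ^ (1 / (d - 1)) * (b ^ (1 / (d - 1)) * x ^ (1 - 1 / (d - 1))) := by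
        rw [Real.mul_rpow (by linarith) hb]
        ring
    _ ≤ d ^ (1 / (d - 1)) * ((x ^ (1 / d)) ^ (1 / (d - 1)) * x ^ (1 - 1 / (d - 1))) := by
        gcongr
    _ = d ^ (1 / (d - 1)) * x ^ (1 - 1 / d) := by
        rw [← Real.rpow_mul hx.le, ← Real.rpow_add hx]
        congr 2
        field_simp
        ring

theorem stmt_14 (d : ℕ) (hd : 3 ≤ d) (γ : ℝ) (hγ : 1 ≤ γ)
    (h2 : ∀ m : ℕ, 1 ≤ m →
      (lowerCount 2 m : ℝ) ≤ Real.exp (Real.pi * Real.sqrt (2 * (m : ℝ) / 3)))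
    (hprev : ∀ k : ℕ, 1 ≤ k →
      (lowerCount (d - 1) k : ℝ) ≤ γ ^ ((k : ℝ) ^ (1 - 1 / ((d : ℝ) - 1)))) :
    ∀ n : ℕ, 1 ≤ n →
      (lowerCount d n : ℝ) ≤
        Real.exp (Real.pi * Real.sqrt (2 * (n : ℝ) / 3)) *
          (d : ℝ) ^ ((d : ℝ) * (n : ℝ) ^ ((1 : ℝ) / (d : ℝ))) *
          γ ^ ((d : ℝ) ^ ((1 : ℝ) / ((d : ℝ) - 1)) * (n : ℝ) ^ (1 - 1 / (d : ℝ))) := by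
  intro n hn
  set B := ⌊(n : ℝ) ^ ((1 : ℝ) / d)⌋₊
  have hB : (B : ℝ) ≤ (n : ℝ) ^ ((1 : ℝ) / d) := Nat.floor_le (by positivity)
  have hnB : n < (B + 1) ^ (d - 1 + 1) := by
    rw [Nat.sub_add_cancel (by omega : 1 ≤ d)]
    exact_mod_cast lt_floor_rpow_one_div_add_one_pow (Nat.cast_nonneg n) (by omega : d ≠ 0)
  have hd₁ : (2 : ℝ) ≤ (d : ℝ) - 1 := by
    have : (3 : ℝ) ≤ d := by exact_mod_cast hd
    linarith
  have hinv₀ : 0 ≤ 1 / ((d : ℝ) - 1) := one_div_nonneg.mpr (by linarith)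
  have hinv₁ : 1 / ((d : ℝ) - 1) ≤ 1 := (div_le_one (by linarith)).mpr (by linarith)
  have key := lowerCount_succ_le hγ (by linarith) (by linarith) hprev hnB
  rw [Nat.sub_add_cancel (by omega : 1 ≤ d), sub_sub_cancel] at key
  refine key.trans ?_
  gcongr ?_ * ?_ * ?_
  · exact h2 n hn
  · rw [← Real.rpow_natCast]
    refine Real.rpow_le_rpow_of_exponent_le (by exact_mod_cast (by omega : 1 ≤ d)) ?_
    push_cast
    gcongr
  · refine Real.rpow_le_rpow_of_exponent_le hγ ?_
    push_cast
    exact mul_rpow_mul_rpow_le_of_le_rpow (by linarith) (by positivity) (by positivity) hB
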